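/- arXiv:1908.03980 — 3 statements merged into one kernel-verified Lean document; each statement's English description precedes it below -/
import Mathlib

section
/- Let K₁, K₂ ⊆ ℝⁿ be closed sets, x ∈ K₁ ∩ K₂, and v ∈ ℝⁿ. If v ∈ D_{int(K₁)}(x) ∩ T_{K₂}(x), then v ∈ T_{K₁ ∩ K₂}(x). -/
open Filter Set

/-- The contingent cone of `K` at `x` (sequence characterization). -/
def contingentCone {n : ℕ} (K : Set (EuclideanSpace ℝ (Fin n)))
    (x : EuclideanSpace ℝ (Fin n)) : Set (EuclideanSpace ℝ (Fin n)) :=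
  {v | ∃ (h : ℕ → ℝ) (w : ℕ → EuclideanSpace ℝ (Fin n)),
      (∀ i, 0 < h i) ∧ Filter.Tendsto h Filter.atTop (nhds 0) ∧
        Filter.Tendsto w Filter.atTop (nhds v) ∧ ∀ i, x + h i • w i ∈ K}

/-- The Dubovitsky–Miliutin cone of `S` at `x`. -/
def dmCone {n : ℕ} (S : Set (EuclideanSpace ℝ (Fin n)))
    (x : EuclideanSpace ℝ (Fin n)) : Set (EuclideanSpace ℝ (Fin n)) :=
  {v | ∃ α > (0 : ℝ), ∃ ε > (0 : ℝ), ∀ δ ∈ Set.Ioc (0 : ℝ) α,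
      ∀ w ∈ Metric.closedBall (0 : EuclideanSpace ℝ (Fin n)) ε, x + δ • (v + w) ∈ S}

theorem stmt_3 {n : ℕ} (K₁ K₂ : Set (EuclideanSpace ℝ (Fin n)))
    (hK₁ : IsClosed K₁) (hK₂ : IsClosed K₂)
    (x : EuclideanSpace ℝ (Fin n)) (hx : x ∈ K₁ ∩ K₂)
    (v : EuclideanSpace ℝ (Fin n))
    (hv : v ∈ dmCone (interior K₁) x ∩ contingentCone K₂ x) :
    v ∈ contingentCone (K₁ ∩ K₂) x := by
  obtain ⟨⟨α, hα, ε, hε, hDM⟩, h, w, hpos, hh0, hwv, hmem⟩ := hv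
  have h1 : ∀ᶠ i in atTop, h i ≤ α :=
    hh0.eventually (eventually_le_nhds hα)
  have h2 : ∀ᶠ i in atTop, ‖w i - v‖ ≤ ε := by
    have : Tendsto (fun i => ‖w i - v‖) atTop (nhds 0) := by
      simpa using (tendsto_sub_nhds_zero_iff.mpr hwv).norm
    exact this.eventually (eventually_le_nhds hε)
  obtain ⟨N, hN⟩ := (h1.and h2).exists_forall_of_atTop
  refine ⟨fun i => h (i + N), fun i => w (i + N), fun i => hpos _,
    hh0.comp (tendsto_add_atTop_nat N), hwv.comp (tendsto_add_atTop_nat N), fun i => ?_⟩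
  refine ⟨interior_subset ?_, hmem _⟩
  have := hDM (h (i + N)) ⟨hpos _, (hN (i + N) (Nat.le_add_left N i)).1⟩
    (w (i + N) - v) (by simpa using (hN (i + N) (Nat.le_add_left N i)).2)
  simpa using this
end

section
/- Let M ⊆ ℝⁿ be closed, B : ℝⁿ → ℝ continuous, and K := {x ∈ M : B(x) ≤ 0}. Let x ∈ ∂K ∩ int(M) be such that B is continuously differentiable on a neighborhood of x and ∇B(x) ≠ 0. Then T_K(x) = {v ∈ ℝⁿ : ⟨∇B(x), v⟩ ≤ 0}. -/
open Filter Set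
open scoped RealInnerProductSpace

/-!
A point of `∂K ∩ int M` satisfies `B x = 0`, so on `K` the function `B` attains its maximum at `x`.
Fermat's rule along the tangent directions gives `⟪∇B x, v⟫ ≤ 0` on the cone.
Conversely, every direction `u` with `⟪∇B x, u⟫ < 0` points strictly into `K`, and any `v` with
`⟪∇B x, v⟫ ≤ 0` is a limit of such directions `v - ε ∇B x`; a diagonal choice of step sizes puts
`v` in the contingent cone.
-/

open scoped Topology NNReal

theorem eq_zero_of_mem_frontier_sublevel {X : Type*} [TopologicalSpace X] {M : Set X}
    {B : X → ℝ} {x : X} (hB : ContinuousAt B x) (hx : x ∈ frontier {y ∈ M | B y ≤ 0})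
    (hM : M ∈ 𝓝 x) : B x = 0 := by
  refine le_antisymm ?_ ?_
  · by_contra! hpos
    obtain ⟨y, ⟨-, hy⟩, hyB⟩ := ((mem_closure_iff_frequently.1 hx.1).and_eventually
      (hB.eventually (lt_mem_nhds hpos))).exists
    exact hy.not_gt hyB
  · by_contra! hneg
    refine hx.2 (mem_interior_iff_mem_nhds.2 ?_)
    filter_upwards [hM, hB.eventually (gt_mem_nhds hneg)] with y hyM hyB using ⟨hyM, hyB.le⟩

section NormedSpace

variable {E : Type*} [NormedAddCommGroup E] [NormedSpace ℝ E]
  {B : E → ℝ} {f : StrongDual ℝ E} {x u : E}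

theorem HasFDerivAt.eventually_add_smul_lt (hB : HasFDerivAt B f x) (hu : f u < 0) :
    ∀ᶠ t in 𝓝[>] (0 : ℝ), B (x + t • u) < B x := by
  have hline : HasDerivAt (fun t : ℝ ↦ B (x + t • u)) (f u) 0 := by
    have hB' : HasFDerivAt B f (x + (0 : ℝ) • u) := by simpa using hB
    have hdir : HasDerivAt (fun t : ℝ ↦ x + t • u) u 0 := by
      simpa using ((hasDerivAt_id (0 : ℝ)).smul_const u).const_add x
    exact hB'.comp_hasDerivAt 0 hdir
  filter_upwards [hline.tendsto_slope_zero_right.eventually (gt_mem_nhds hu),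
    self_mem_nhdsWithin] with t hslope (ht : 0 < t)
  simp only [zero_add, zero_smul, add_zero, smul_eq_mul] at hslope
  exact sub_neg.1 (neg_of_mul_neg_right hslope (inv_pos.2 ht).le)

theorem HasFDerivAt.eventually_add_smul_mem_sublevel {M : Set E} (hB : HasFDerivAt B f x)
    (hM : M ∈ 𝓝 x) (hBx : B x ≤ 0) (hu : f u < 0) :
    ∀ᶠ t in 𝓝[>] (0 : ℝ), x + t • u ∈ {y ∈ M | B y ≤ 0} := by
  have hline : Tendsto (fun t : ℝ ↦ x + t • u) (𝓝[>] 0) (𝓝 x) :=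
    ((continuous_const.add (continuous_id.smul continuous_const)).tendsto' 0 x
      (by simp)).mono_left nhdsWithin_le_nhds
  filter_upwards [hline.eventually hM, hB.eventually_add_smul_lt hu] with t htM htB
    using ⟨htM, (htB.trans_le hBx).le⟩

end NormedSpace

section ContingentCone

variable {n : ℕ} {K : Set (EuclideanSpace ℝ (Fin n))} {x v : EuclideanSpace ℝ (Fin n)}

theorem contingentCone_subset_posTangentConeAt : contingentCone K x ⊆ posTangentConeAt K x := by
  rintro v ⟨h, w, hpos, hh0, hwv, hmem⟩
  refine mem_tangentConeAt_of_seq atTop (fun i ↦ (h i)⁻¹.toNNReal)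
    (fun i ↦ h i • w i) (by simpa using hh0.smul hwv) (.of_forall hmem) (hwv.congr fun i ↦ ?_)
  rw [NNReal.smul_def, Real.coe_toNNReal _ (inv_pos.2 (hpos i)).le, smul_smul,
    inv_mul_cancel₀ (hpos i).ne', one_smul]

theorem mem_contingentCone_of_tendsto {w : ℕ → EuclideanSpace ℝ (Fin n)}
    (hwv : Tendsto w atTop (𝓝 v)) (hw : ∀ i, ∀ᶠ t in 𝓝[>] (0 : ℝ), x + t • w i ∈ K) :
    v ∈ contingentCone K x := by
  have (i : ℕ) : ∃ t ∈ Ioo (0 : ℝ) (1 / (i + 1)), x + t • w i ∈ K :=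
    ((hw i).and (Ioo_mem_nhdsGT (by positivity))).exists.imp fun _ ht ↦ ⟨ht.2, ht.1⟩
  choose t ht htK using this
  exact ⟨t, w, fun i ↦ (ht i).1, squeeze_zero (fun i ↦ (ht i).1.le) (fun i ↦ (ht i).2.le)
    tendsto_one_div_add_atTop_nhds_zero_nat, hwv, htK⟩

theorem setOf_apply_nonpos_subset_contingentCone {f : StrongDual ℝ (EuclideanSpace ℝ (Fin n))}
    (hf : f ≠ 0) (hK : ∀ u, f u < 0 → ∀ᶠ t in 𝓝[>] (0 : ℝ), x + t • u ∈ K) :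
    {v | f v ≤ 0} ⊆ contingentCone K x := by
  obtain ⟨g, hg⟩ : ∃ g, 0 < f g := by
    obtain ⟨g, hg⟩ := DFunLike.ne_iff.1 hf
    rcases hg.lt_or_gt with hneg | hpos
    · exact ⟨-g, by simpa using hneg⟩
    · exact ⟨g, hpos⟩
  intro v hv
  have hlim : Tendsto (fun i : ℕ ↦ v - (1 / ((i : ℝ) + 1)) • g) atTop (𝓝 v) := by
    have := (tendsto_const_nhds (x := v)).sub
      ((tendsto_one_div_add_atTop_nhds_zero_nat (𝕜 := ℝ)).smul_const g)
    rwa [zero_smul, sub_zero] at this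
  refine mem_contingentCone_of_tendsto hlim fun i ↦ hK _ ?_
  have hεg : 0 < 1 / ((i : ℝ) + 1) * f g := mul_pos (by positivity) hg
  simp only [map_sub, map_smul, smul_eq_mul, mem_ofPred_eq] at hv ⊢
  linarith

end ContingentCone

theorem stmt_5_general {n : ℕ} (M : Set (EuclideanSpace ℝ (Fin n)))
    (B : EuclideanSpace ℝ (Fin n) → ℝ)
    (K : Set (EuclideanSpace ℝ (Fin n))) (hK : K = {y ∈ M | B y ≤ 0})
    (x : EuclideanSpace ℝ (Fin n)) (hx : x ∈ frontier K ∩ interior M)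
    (U : Set (EuclideanSpace ℝ (Fin n))) (hU : IsOpen U) (hxU : x ∈ U)
    (hB : ContDiffOn ℝ 1 B U) (hgrad : gradient B x ≠ 0) :
    contingentCone K x = {v | ⟪gradient B x, v⟫ ≤ 0} := by
  subst hK
  obtain ⟨hxF, hxM⟩ := hx
  have hM : M ∈ 𝓝 x := mem_interior_iff_mem_nhds.1 hxM
  have hBx : HasFDerivAt B (fderiv ℝ B x) x :=
    ((hB.differentiableOn one_ne_zero).differentiableAt (hU.mem_nhds hxU)).hasFDerivAt
  have hBx0 : B x = 0 := eq_zero_of_mem_frontier_sublevel hBx.continuousAt hxF hM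
  have hfderiv : fderiv ℝ B x ≠ 0 := fun h ↦ hgrad (by simp [gradient, h])
  simp only [gradient, InnerProductSpace.toDual_symm_apply]
  refine Subset.antisymm (fun v hv ↦ ?_) (setOf_apply_nonpos_subset_contingentCone hfderiv
    fun u hu ↦ hBx.eventually_add_smul_mem_sublevel hM hBx0.le hu)
  have hmax : IsLocalMaxOn B {y ∈ M | B y ≤ 0} x :=
    IsMaxOn.localize fun y hy ↦ hBx0 ▸ hy.2
  exact hmax.hasFDerivWithinAt_nonpos hBx.hasFDerivWithinAt
    (contingentCone_subset_posTangentConeAt hv)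

theorem stmt_5 {n : ℕ} (M : Set (EuclideanSpace ℝ (Fin n))) (hM : IsClosed M)
    (B : EuclideanSpace ℝ (Fin n) → ℝ) (hBcont : Continuous B)
    (K : Set (EuclideanSpace ℝ (Fin n))) (hK : K = {y ∈ M | B y ≤ 0})
    (x : EuclideanSpace ℝ (Fin n)) (hx : x ∈ frontier K ∩ interior M)
    (U : Set (EuclideanSpace ℝ (Fin n))) (hU : IsOpen U) (hxU : x ∈ U)
    (hB : ContDiffOn ℝ 1 B U) (hgrad : gradient B x ≠ 0) :
    contingentCone K x = {v | ⟪gradient B x, v⟫ ≤ 0} :=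
  stmt_5_general M B K hK x hx U hU hxU hB hgrad
end

section
/- Let M ⊆ ℝⁿ be closed, B : ℝⁿ → ℝᵐ continuous, and K := {x ∈ M : B_i(x) ≤ 0 for all i}. Let x ∈ ∂K ∩ int(M), set I_x := {i : B_i(x) = 0}, and assume B is continuously differentiable on a neighborhood of x with ∇B_i(x) ≠ 0 for all i ∈ I_x. Then D_{int(K)}(x) = {v ∈ ℝⁿ : ⟨∇B_i(x), v⟩ < 0 for all i ∈ I_x}. -/
open Filter Set
open scoped RealInnerProductSpace Topology

section NormedSpace

variable {E : Type*} [NormedAddCommGroup E] [NormedSpace ℝ E]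

theorem tendsto_add_smul_add_nhdsGT_prod_nhds (x v : E) :
    Tendsto (fun p : ℝ × E => x + p.1 • (v + p.2)) (𝓝[>] 0 ×ˢ 𝓝 0) (𝓝 x) := by
  have hcont : Continuous fun p : ℝ × E => x + p.1 • (v + p.2) := by fun_prop
  have hle : 𝓝[>] (0 : ℝ) ×ˢ 𝓝 (0 : E) ≤ 𝓝 (0, 0) := by
    rw [nhds_prod_eq]
    exact Filter.prod_mono nhdsWithin_le_nhds le_rfl
  simpa using (hcont.tendsto (0, 0)).mono_left hle

theorem HasFDerivAt.apply_nonpos_of_frequently_le {f : E → ℝ} {f' : E →L[ℝ] ℝ} {x u : E}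
    (hf : HasFDerivAt f f' x) (h : ∃ᶠ t in 𝓝[>] (0 : ℝ), f (x + t • u) ≤ f x) : f' u ≤ 0 :=
  IsLocalMaxOn.hasFDerivWithinAt_nonpos (s := {y | f y ≤ f x})
    (eventually_of_mem self_mem_nhdsWithin fun _ hy => hy) hf.hasFDerivWithinAt
    (mem_posTangentConeAt_of_frequently_mem h)

theorem HasFDerivAt.eventually_lt_of_apply_neg {f : E → ℝ} {f' : E →L[ℝ] ℝ} {x v : E}
    (hf : HasFDerivAt f f' x) (hv : f' v < 0) :
    ∀ᶠ p : ℝ × E in 𝓝[>] 0 ×ˢ 𝓝 0, f (x + p.1 • (v + p.2)) < f x := by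
  set c := -f' v / (‖v‖ + 1)
  have hc : 0 < c := div_pos (neg_pos.2 hv) (by positivity)
  have hcv : f' v + c * ‖v‖ < 0 := by
    have : f' v + c * ‖v‖ = f' v / (‖v‖ + 1) := by simp only [c]; field_simp; ring
    rw [this]
    exact div_neg_of_neg_of_pos hv (by positivity)
  have hremainder : ∀ᶠ p : ℝ × E in 𝓝[>] 0 ×ˢ 𝓝 0,
      ‖f (x + p.1 • (v + p.2)) - f x - f' (x + p.1 • (v + p.2) - x)‖
        ≤ c * ‖x + p.1 • (v + p.2) - x‖ :=
    (tendsto_add_smul_add_nhdsGT_prod_nhds x v).eventually (hf.isLittleO.def hc)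
  have hslope : ∀ᶠ p : ℝ × E in 𝓝[>] 0 ×ˢ 𝓝 0, f' (v + p.2) + c * ‖v + p.2‖ < 0 := by
    have hcont : Continuous fun w : E => f' (v + w) + c * ‖v + w‖ := by fun_prop
    exact tendsto_snd.eventually
      ((hcont.tendsto 0).eventually (gt_mem_nhds (by simpa using hcv)))
  have hpos : ∀ᶠ p : ℝ × E in 𝓝[>] 0 ×ˢ 𝓝 0, 0 < p.1 :=
    tendsto_fst.eventually self_mem_nhdsWithin
  filter_upwards [hremainder, hslope, hpos] with ⟨δ, w⟩ hrem hneg hδ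
  simp only [add_sub_cancel_left, map_smul, smul_eq_mul, norm_smul, Real.norm_of_nonneg hδ.le]
    at hrem hneg ⊢
  linarith [(le_abs_self _).trans hrem, mul_neg_of_pos_of_neg hδ hneg]

end NormedSpace

section DMCone

variable {n : ℕ}

theorem mem_dmCone_iff {S : Set (EuclideanSpace ℝ (Fin n))} {x v : EuclideanSpace ℝ (Fin n)} :
    v ∈ dmCone S x ↔ ∀ᶠ p : ℝ × EuclideanSpace ℝ (Fin n) in 𝓝[>] 0 ×ˢ 𝓝 0,
      x + p.1 • (v + p.2) ∈ S := by
  rw [((nhdsGT_basis_Ioc (0 : ℝ)).prod Metric.nhds_basis_closedBall).eventually_iff]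
  simp only [dmCone, mem_ofPred_eq, mem_prod, mem_Ioc, Metric.mem_closedBall, Prod.forall]
  constructor
  · rintro ⟨α, hα, ε, hε, h⟩
    exact ⟨(α, ε), ⟨hα, hε⟩, fun δ w hδw => h δ hδw.1 w hδw.2⟩
  · rintro ⟨⟨α, ε⟩, ⟨hα, hε⟩, h⟩
    exact ⟨α, hα, ε, hε, fun δ hδ w hw => h δ w ⟨hδ, hw⟩⟩

theorem inner_neg_of_mem_dmCone {S : Set (EuclideanSpace ℝ (Fin n))}
    {f : EuclideanSpace ℝ (Fin n) → ℝ} {x v g : EuclideanSpace ℝ (Fin n)}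
    (hv : v ∈ dmCone S x) (hf : HasGradientAt f g x) (hg : g ≠ 0) (hS : ∀ y ∈ S, f y ≤ f x) :
    ⟪g, v⟫ < 0 := by
  obtain ⟨α, hα, ε, hε, h⟩ := hv
  have hg_pos : 0 < ‖g‖ := norm_pos_iff.2 hg
  set w := (ε / ‖g‖) • g
  have hw : w ∈ Metric.closedBall 0 ε := by
    simp [w, norm_smul, abs_of_pos hε, hg_pos.ne']
  have hgw : ⟪g, w⟫ = ε * ‖g‖ := by
    simp only [w, real_inner_smul_right, real_inner_self_eq_norm_sq]
    field_simp
  have hsteps : ∀ᶠ δ in 𝓝[>] (0 : ℝ), f (x + δ • (v + w)) ≤ f x :=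
    mem_of_superset (Ioc_mem_nhdsGT hα) fun δ hδ => hS _ (h δ hδ w hw)
  have hdescent : ⟪g, v + w⟫ ≤ 0 :=
    hf.hasFDerivAt.apply_nonpos_of_frequently_le hsteps.frequently
  rw [inner_add_right, hgw] at hdescent
  linarith [mul_pos hε hg_pos]

end DMCone

theorem stmt_7_general {n m : ℕ} (M : Set (EuclideanSpace ℝ (Fin n)))
    (B : Fin m → EuclideanSpace ℝ (Fin n) → ℝ) (hBcont : ∀ i, Continuous (B i))
    (K : Set (EuclideanSpace ℝ (Fin n))) (hK : K = {y ∈ M | ∀ i, B i y ≤ 0})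
    (x : EuclideanSpace ℝ (Fin n)) (hx : x ∈ frontier K ∩ interior M)
    (I : Set (Fin m)) (hI : I = {i | B i x = 0})
    (U : Set (EuclideanSpace ℝ (Fin n))) (hU : IsOpen U) (hxU : x ∈ U)
    (hB : ∀ i, ContDiffOn ℝ 1 (B i) U)
    (hgrad : ∀ i ∈ I, gradient (B i) x ≠ 0) :
    dmCone (interior K) x = {v | ∀ i ∈ I, ⟪gradient (B i) x, v⟫ < 0} := by
  subst hI hK
  have hxB : ∀ i, B i x ≤ 0 := fun i =>
    closure_minimal (fun y hy => hy.2 i) (isClosed_le (hBcont i) continuous_const)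
      (frontier_subset_closure hx.1)
  have hgradAt : ∀ i, HasGradientAt (B i) (gradient (B i) x) x := fun i =>
    (((hB i).differentiableOn one_ne_zero).differentiableAt (hU.mem_nhds hxU)).hasGradientAt
  have hW : interior M ∩ ⋂ i, {y | B i y < 0} ⊆ interior {y ∈ M | ∀ i, B i y ≤ 0} :=
    interior_maximal (fun y hy => ⟨interior_subset hy.1, fun i => (mem_iInter.1 hy.2 i).le⟩)
      (isOpen_interior.inter (isOpen_iInter_of_finite fun i =>
        isOpen_lt (hBcont i) continuous_const))
  ext v
  constructor
  · intro hv i hi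
    exact inner_neg_of_mem_dmCone hv (hgradAt i) (hgrad i hi) fun y hy =>
      (hi : B i x = 0) ▸ (interior_subset hy).2 i
  · intro hv
    have hnhds : ∀ T ∈ 𝓝 x, ∀ᶠ p : ℝ × EuclideanSpace ℝ (Fin n) in 𝓝[>] 0 ×ˢ 𝓝 0,
        x + p.1 • (v + p.2) ∈ T := fun T hT =>
      tendsto_add_smul_add_nhdsGT_prod_nhds x v hT
    rw [mem_dmCone_iff]
    refine ((hnhds _ (isOpen_interior.mem_nhds hx.2)).and (eventually_all.2 fun i => ?_)).mono
      fun p hp => hW ⟨hp.1, mem_iInter.2 hp.2⟩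
    rcases (hxB i).lt_or_eq with hlt | heq
    · exact hnhds _ ((isOpen_lt (hBcont i) continuous_const).mem_nhds hlt)
    · simpa [heq] using (hgradAt i).hasFDerivAt.eventually_lt_of_apply_neg (hv i heq)

theorem stmt_7 {n m : ℕ} (M : Set (EuclideanSpace ℝ (Fin n))) (hM : IsClosed M)
    (B : Fin m → EuclideanSpace ℝ (Fin n) → ℝ) (hBcont : ∀ i, Continuous (B i))
    (K : Set (EuclideanSpace ℝ (Fin n))) (hK : K = {y ∈ M | ∀ i, B i y ≤ 0})
    (x : EuclideanSpace ℝ (Fin n)) (hx : x ∈ frontier K ∩ interior M)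
    (I : Set (Fin m)) (hI : I = {i | B i x = 0})
    (U : Set (EuclideanSpace ℝ (Fin n))) (hU : IsOpen U) (hxU : x ∈ U)
    (hB : ∀ i, ContDiffOn ℝ 1 (B i) U)
    (hgrad : ∀ i ∈ I, gradient (B i) x ≠ 0) :
    dmCone (interior K) x = {v | ∀ i ∈ I, ⟪gradient (B i) x, v⟫ < 0} :=
  stmt_7_general M B hBcont K hK x hx I hI U hU hxU hB hgrad
end
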